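/- Let G be a graph with a perfect matching M and let H be obtained from G by subdividing exactly the edges of M (each once). Then χ_pcf(H) ≤ χ(G) + 1. -/
import Mathlib


open SimpleGraph

/-- A proper conflict-free coloring: proper, and every non-isolated vertex has a color
appearing exactly once in its open neighborhood. -/
def IsPCFColoring {V : Type*} (G : SimpleGraph V) {n : ℕ} (c : V → Fin n) : Prop :=
  (∀ u v, G.Adj u v → c u ≠ c v) ∧
  ∀ v : V, (G.neighborSet v).Nonempty →
    ∃ k : Fin n, ∃! u, u ∈ G.neighborSet v ∧ c u = k

/-- The PCF chromatic number. -/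
noncomputable def pcfChromNum {V : Type*} (G : SimpleGraph V) : ℕ :=
  sInf {n | ∃ c : V → Fin n, IsPCFColoring G c}

/-- The chromatic number (as a natural number). -/
noncomputable def chromNum {V : Type*} (G : SimpleGraph V) : ℕ :=
  sInf {n | G.Colorable n}
/-- The graph obtained from `G` by subdividing exactly the edges of the subgraph `M` once. -/
def subdivAlong {V : Type*} (G M : SimpleGraph V) : SimpleGraph (V ⊕ M.edgeSet) :=
  SimpleGraph.fromRel (fun a b => match a, b with
    | Sum.inl u, Sum.inl v => G.Adj u v ∧ ¬ M.Adj u v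
    | Sum.inl v, Sum.inr e => v ∈ (e : Sym2 V)
    | _, _ => False)

theorem pcf_subdiv_matching {V : Type*} [Fintype V] (G M : SimpleGraph V)
    (hle : M ≤ G) (hpm : ∀ v : V, ∃! w : V, M.Adj v w) :
    pcfChromNum (subdivAlong G M) ≤ chromNum G + 1 := by
  classical
  set k := chromNum G with hk
  have hmem : k ∈ {n | G.Colorable n} :=
    Nat.sInf_mem (⟨Fintype.card V, G.colorable_of_fintype⟩ : Set.Nonempty {n | G.Colorable n})
  obtain ⟨c⟩ := hmem
  unfold pcfChromNum
  apply Nat.sInf_le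
  refine ⟨Sum.elim (fun v => (c v).castSucc) (fun _ => Fin.last k), ?_, ?_⟩
  · -- properness
    rintro (u | e) (v | f) hadj <;>
      rw [subdivAlong, fromRel_adj] at hadj
    · obtain ⟨hne, h | h⟩ := hadj
      · simp only [Sum.elim_inl]
        exact fun hh => c.valid h.1 (Fin.castSucc_injective _ hh)
      · simp only [Sum.elim_inl]
        exact fun hh => c.valid h.1 (Fin.castSucc_injective _ hh.symm)
    · exact (Fin.castSucc_lt_last _).ne
    · exact (Fin.castSucc_lt_last _).ne'
    · obtain ⟨-, h | h⟩ := hadj <;> exact h.elim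
  · -- conflict-free
    rintro (u | ⟨e, he⟩) -
    · obtain ⟨w, hw, hwu⟩ := hpm u
      refine ⟨Fin.last k, Sum.inr ⟨s(u, w), M.mem_edgeSet.2 hw⟩, ⟨?_, rfl⟩, ?_⟩
      · rw [mem_neighborSet, subdivAlong, fromRel_adj]
        exact ⟨by simp, Or.inl (Sym2.mem_mk_left u w)⟩
      · rintro (v | ⟨e', he'⟩) ⟨hmem, hcol⟩
        · exact absurd hcol (Fin.castSucc_lt_last _).ne
        · rw [mem_neighborSet, subdivAlong, fromRel_adj] at hmem
          obtain ⟨-, h | h⟩ := hmem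
          · have hsp := Sym2.other_spec h
            have hM : M.Adj u (Sym2.Mem.other h) := M.mem_edgeSet.1 (by rw [hsp]; exact he')
            have hwe := hwu _ hM
            exact congrArg Sum.inr (Subtype.ext (by rw [← hsp, hwe]))
          · exact h.elim
    · revert he
      induction e using Sym2.ind with
      | _ a b =>
        intro he
        have hab : M.Adj a b := M.mem_edgeSet.1 he
        refine ⟨(c a).castSucc, Sum.inl a, ⟨?_, rfl⟩, ?_⟩
        · rw [mem_neighborSet, subdivAlong, fromRel_adj]
          exact ⟨by simp, Or.inr (Sym2.mem_mk_left a b)⟩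
        · rintro (v | ⟨e', he'⟩) ⟨hmem, hcol⟩
          · rw [mem_neighborSet, subdivAlong, fromRel_adj] at hmem
            obtain ⟨-, h | h⟩ := hmem
            · exact h.elim
            · rcases Sym2.mem_iff.1 h with rfl | rfl
              · rfl
              · exact absurd hcol fun hh =>
                  c.valid (hle hab) (Fin.castSucc_injective _ hh).symm
          · exact absurd hcol (Fin.castSucc_lt_last _).ne'
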